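/- Let u, v ∈ (0,1) and ρ ∈ (−1,1), ρ ≠ 0. Then C(u,v;ρ) = ∫₀ᵘ Φ((Φ⁻¹(v) − ρ·Φ⁻¹(t))/√(1−ρ²)) dt. -/

import Mathlib

open MeasureTheory Real Set

/-- Standard normal density φ. -/
noncomputable def stdPdf (x : ℝ) : ℝ :=
  (1 / Real.sqrt (2 * Real.pi)) * Real.exp (-x ^ 2 / 2)

/-- Standard normal distribution function Φ. -/
noncomputable def stdCdf (h : ℝ) : ℝ := ∫ x in Set.Iio h, stdPdf x

/-- Inverse Φ⁻¹ of the standard normal distribution function (on (0,1)). -/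
noncomputable def stdQuantile : ℝ → ℝ := Function.invFun stdCdf

/-- Bivariate standard normal density φ₂ with correlation ρ. -/
noncomputable def binPdf (x y ρ : ℝ) : ℝ :=
  (1 / (2 * Real.pi * Real.sqrt (1 - ρ ^ 2))) *
    Real.exp (-(x ^ 2 - 2 * ρ * x * y + y ^ 2) / (2 * (1 - ρ ^ 2)))

/-- Bivariate standard normal distribution function Φ₂. -/
noncomputable def binCdf (h k ρ : ℝ) : ℝ :=
  ∫ x in Set.Iio h, ∫ y in Set.Iio k, binPdf x y ρ

/-- The bivariate normal copula C(u,v;ρ) = Φ₂(Φ⁻¹(u),Φ⁻¹(v);ρ). -/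
noncomputable def normCopula (u v ρ : ℝ) : ℝ :=
  binCdf (stdQuantile u) (stdQuantile v) ρ

/-- g(u;ρ) = Φ(√((1−ρ)/(1+ρ))·Φ⁻¹(u)). -/
noncomputable def gFun (u ρ : ℝ) : ℝ :=
  stdCdf (Real.sqrt ((1 - ρ) / (1 + ρ)) * stdQuantile u)

/-!
Integrating the bivariate density first in `y`, the substitution `y = ρ x + √(1 - ρ²) z` factors
`φ₂(x, y; ρ)` into `φ(x) φ(z)`, so `Φ₂(h, k; ρ) = ∫_{x < h} φ(x) Φ((k - ρ x)/√(1 - ρ²)) dx`.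
The quantile substitution `x = Φ⁻¹(t)`, `dt = φ(x) dx`, then turns this into the integral over
`t ∈ (0, u)` when `h = Φ⁻¹(u)`.
-/

open Filter Topology

lemma stdPdf_eq_gaussianPDFReal : stdPdf = ProbabilityTheory.gaussianPDFReal 0 1 := by
  ext x
  simp [stdPdf, ProbabilityTheory.gaussianPDFReal]

lemma stdPdf_pos (x : ℝ) : 0 < stdPdf x := by
  rw [stdPdf_eq_gaussianPDFReal]
  exact ProbabilityTheory.gaussianPDFReal_pos 0 1 x one_ne_zero

lemma continuous_stdPdf : Continuous stdPdf := by
  unfold stdPdf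
  fun_prop

lemma integrable_stdPdf : Integrable stdPdf := by
  rw [stdPdf_eq_gaussianPDFReal]
  exact ProbabilityTheory.integrable_gaussianPDFReal 0 1

lemma integral_stdPdf : ∫ x, stdPdf x = 1 := by
  rw [stdPdf_eq_gaussianPDFReal]
  exact ProbabilityTheory.integral_gaussianPDFReal_eq_one 0 one_ne_zero

lemma stdCdf_sub_stdCdf (a b : ℝ) : stdCdf b - stdCdf a = ∫ t in a..b, stdPdf t := by
  simp only [stdCdf, ← integral_Iic_eq_integral_Iio]
  exact intervalIntegral.integral_Iic_sub_Iic integrable_stdPdf.integrableOn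
    integrable_stdPdf.integrableOn

lemma hasDerivAt_stdCdf (x : ℝ) : HasDerivAt stdCdf (stdPdf x) x := by
  have hstdCdf : stdCdf = fun y ↦ stdCdf 0 + ∫ t in (0 : ℝ)..y, stdPdf t := by
    ext y
    rw [← stdCdf_sub_stdCdf, add_sub_cancel]
  rw [hstdCdf]
  exact (intervalIntegral.integral_hasDerivAt_right integrable_stdPdf.intervalIntegrable
    (continuous_stdPdf.stronglyMeasurableAtFilter _ _) continuous_stdPdf.continuousAt).const_add _

lemma continuous_stdCdf : Continuous stdCdf :=
  continuous_iff_continuousAt.mpr fun x ↦ (hasDerivAt_stdCdf x).continuousAt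

lemma strictMono_stdCdf : StrictMono stdCdf :=
  strictMono_of_hasDerivAt_pos hasDerivAt_stdCdf stdPdf_pos

lemma tendsto_stdCdf_atBot : Tendsto stdCdf atBot (𝓝 0) :=
  tendsto_integral_Iio_zero tendsto_id

lemma tendsto_stdCdf_atTop : Tendsto stdCdf atTop (𝓝 1) := by
  rw [← integral_stdPdf]
  exact (aecover_Iio tendsto_id).integral_tendsto_of_countably_generated integrable_stdPdf

lemma stdCdf_pos (x : ℝ) : 0 < stdCdf x :=
  (strictMono_stdCdf.monotone.le_of_tendsto tendsto_stdCdf_atBot (x - 1)).trans_lt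
    (strictMono_stdCdf (sub_one_lt x))

lemma mem_range_stdCdf {w : ℝ} (hw : w ∈ Ioo (0 : ℝ) 1) : w ∈ range stdCdf :=
  mem_range_of_exists_le_of_exists_ge continuous_stdCdf
    ((tendsto_stdCdf_atBot.eventually_lt_const hw.1).exists.imp fun _ ↦ le_of_lt)
    ((tendsto_stdCdf_atTop.eventually_const_lt hw.2).exists.imp fun _ ↦ le_of_lt)

lemma stdCdf_stdQuantile {w : ℝ} (hw : w ∈ Ioo (0 : ℝ) 1) : stdCdf (stdQuantile w) = w :=
  Function.invFun_eq (mem_range_stdCdf hw)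

lemma stdQuantile_stdCdf (x : ℝ) : stdQuantile (stdCdf x) = x :=
  Function.leftInverse_invFun strictMono_stdCdf.injective x

lemma image_stdCdf_Iio_stdQuantile {u : ℝ} (hu : u ∈ Ioo (0 : ℝ) 1) :
    stdCdf '' Iio (stdQuantile u) = Ioo 0 u := by
  ext w
  constructor
  · rintro ⟨x, hx, rfl⟩
    exact ⟨stdCdf_pos x, stdCdf_stdQuantile hu ▸ strictMono_stdCdf hx⟩
  · rintro ⟨hw0, hwu⟩
    obtain ⟨x, rfl⟩ := mem_range_stdCdf ⟨hw0, hwu.trans hu.2⟩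
    refine ⟨x, ?_, rfl⟩
    rwa [mem_Iio, ← strictMono_stdCdf.lt_iff_lt, stdCdf_stdQuantile hu]

lemma intervalIntegral_comp_stdQuantile {u : ℝ} (hu : u ∈ Ioo (0 : ℝ) 1) (g : ℝ → ℝ) :
    ∫ t in (0 : ℝ)..u, g (stdQuantile t) = ∫ x in Iio (stdQuantile u), stdPdf x * g x := by
  rw [intervalIntegral.integral_of_le hu.1.le, integral_Ioc_eq_integral_Ioo,
    ← image_stdCdf_Iio_stdQuantile hu,
    integral_image_eq_integral_abs_deriv_smul measurableSet_Iio
      (fun x _ ↦ (hasDerivAt_stdCdf x).hasDerivWithinAt) strictMono_stdCdf.injective.injOn]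
  refine setIntegral_congr_fun measurableSet_Iio fun x _ ↦ ?_
  rw [stdQuantile_stdCdf, smul_eq_mul, abs_of_pos (stdPdf_pos x)]

lemma setIntegral_Iio_comp_affine {s : ℝ} (hs : 0 < s) (m c : ℝ) (f : ℝ → ℝ) :
    ∫ y in Iio (s * c + m), f y = ∫ z in Iio c, s * f (s * z + m) := by
  have himage : (fun z ↦ s * z + m) '' Iio c = Iio (s * c + m) := by
    rw [show (fun z ↦ s * z + m) = (· + m) ∘ (s * ·) from rfl, image_comp,
      image_mul_left_Iio hs, image_add_const_Iio]
  rw [← himage, integral_image_eq_integral_abs_deriv_smul measurableSet_Iio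
    (fun z _ ↦ ((hasDerivAt_id' z).const_mul s |>.add_const m).hasDerivWithinAt.congr_deriv
      (mul_one s)) fun a _ b _ hab ↦ mul_left_cancel₀ hs.ne' (add_right_cancel hab)]
  simp only [abs_of_pos hs, smul_eq_mul]

lemma sqrt_mul_binPdf_affine {ρ : ℝ} (hρ : 0 < 1 - ρ ^ 2) (x z : ℝ) :
    √(1 - ρ ^ 2) * binPdf x (√(1 - ρ ^ 2) * z + ρ * x) ρ = stdPdf x * stdPdf z := by
  have hs2 : √(1 - ρ ^ 2) ^ 2 = 1 - ρ ^ 2 := Real.sq_sqrt hρ.le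
  have hexponent : -(x ^ 2 - 2 * ρ * x * (√(1 - ρ ^ 2) * z + ρ * x)
      + (√(1 - ρ ^ 2) * z + ρ * x) ^ 2) / (2 * (1 - ρ ^ 2)) = -x ^ 2 / 2 + -z ^ 2 / 2 := by
    field_simp
    linear_combination -z ^ 2 * hs2
  have h2π : √(2 * π) * √(2 * π) = 2 * π := Real.mul_self_sqrt (by positivity)
  rw [binPdf, stdPdf, stdPdf, hexponent, Real.exp_add]
  field_simp
  linear_combination h2π

lemma integral_Iio_binPdf {ρ : ℝ} (hρ : 0 < 1 - ρ ^ 2) (x k : ℝ) :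
    ∫ y in Iio k, binPdf x y ρ = stdPdf x * stdCdf ((k - ρ * x) / √(1 - ρ ^ 2)) := by
  have hs := Real.sqrt_pos.mpr hρ
  have hk : √(1 - ρ ^ 2) * ((k - ρ * x) / √(1 - ρ ^ 2)) + ρ * x = k := by
    rw [mul_div_cancel₀ _ hs.ne', sub_add_cancel]
  nth_rw 1 [← hk]
  rw [setIntegral_Iio_comp_affine hs, stdCdf, ← integral_const_mul]
  simp only [sqrt_mul_binPdf_affine hρ]

theorem copula_conditional_integral_rep_general (u v ρ : ℝ)
    (hu : u ∈ Set.Ioo (0 : ℝ) 1)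
    (hρ : ρ ∈ Set.Ioo (-1 : ℝ) 1) :
    normCopula u v ρ =
      ∫ t in (0 : ℝ)..u,
        stdCdf ((stdQuantile v - ρ * stdQuantile t) / Real.sqrt (1 - ρ ^ 2)) := by
  have h1ρ : 0 < 1 - ρ ^ 2 := by nlinarith [hρ.1, hρ.2]
  rw [normCopula, binCdf, intervalIntegral_comp_stdQuantile hu
    (fun x ↦ stdCdf ((stdQuantile v - ρ * x) / √(1 - ρ ^ 2)))]
  exact setIntegral_congr_fun measurableSet_Iio fun x _ ↦ integral_Iio_binPdf h1ρ x _

theorem copula_conditional_integral_rep (u v ρ : ℝ)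
    (hu : u ∈ Set.Ioo (0 : ℝ) 1) (hv : v ∈ Set.Ioo (0 : ℝ) 1)
    (hρ : ρ ∈ Set.Ioo (-1 : ℝ) 1) (hρ0 : ρ ≠ 0) :
    normCopula u v ρ =
      ∫ t in (0 : ℝ)..u,
        stdCdf ((stdQuantile v - ρ * stdQuantile t) / Real.sqrt (1 - ρ ^ 2)) :=
  copula_conditional_integral_rep_general u v ρ hu hρ
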